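/- With f, h, f_h as above, for all x, x̄ with |x| > h and |x̄| > h one has |f_h(x) - f_h(x̄)| ≤ (3 L_h + 1) |x - x̄|, provided |f(0)| ≤ h. -/

import Mathlib

/-!
Write `a = ‖x‖ ≥ b = ‖y‖ > h` and `u = (h/a) x`, `v = (h/b) y` for the radial projections onto the
sphere of radius `h`. The projection is `2h/a`-Lipschitz there, so `‖f u - f v‖ ≤ 2 L h/a ‖x - y‖`,
and `‖f v‖ ≤ L h + ‖f 0‖ ≤ (L + 1) h`. Splitting
`(a/h) f u - (b/h) f v = (a/h)(f u - f v) + ((a - b)/h) f v` and using `|a - b| ≤ ‖x - y‖`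
gives the bound `2 L ‖x - y‖ + (L + 1) ‖x - y‖`.
-/

variable {E F : Type*} [NormedAddCommGroup E] [NormedAddCommGroup F]

lemma norm_le_of_lipschitz_on_closedBall {f : E → F} {h L : ℝ}
    (hlip : ∀ x y : E, max ‖x‖ ‖y‖ ≤ h → ‖f x - f y‖ ≤ L * ‖x - y‖) {v : E} (hv : ‖v‖ ≤ h) :
    ‖f v‖ ≤ L * ‖v‖ + ‖f 0‖ := by
  have hv0 : ‖f v - f 0‖ ≤ L * ‖v‖ := by
    simpa using hlip v 0 (by simp [hv])
  linarith [norm_le_norm_sub_add (f v) (f 0)]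

variable [NormedSpace ℝ E] [NormedSpace ℝ F]

/-- The paper's `f_h`. -/
noncomputable def radialExtension (f : E → F) (h : ℝ) (x : E) : F :=
  (‖x‖ / h) • f ((h / ‖x‖) • x)

lemma norm_div_norm_smul_sub_div_norm_smul_le {x y : E} (hy : y ≠ 0) (hyx : ‖y‖ ≤ ‖x‖)
    {c : ℝ} (hc : 0 ≤ c) :
    ‖(c / ‖x‖) • x - (c / ‖y‖) • y‖ ≤ 2 * c / ‖x‖ * ‖x - y‖ := by
  have hb : 0 < ‖y‖ := norm_pos_iff.2 hy
  have ha : 0 < ‖x‖ := hb.trans_le hyx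
  have hcoef : 0 ≤ c / ‖y‖ - c / ‖x‖ := sub_nonneg.2 (div_le_div_of_nonneg_left hc hb hyx)
  have hsecond : ‖(c / ‖y‖ - c / ‖x‖) • y‖ ≤ c / ‖x‖ * ‖x - y‖ := by
    calc ‖(c / ‖y‖ - c / ‖x‖) • y‖ = c / ‖x‖ * (‖x‖ - ‖y‖) := by
          rw [norm_smul, Real.norm_of_nonneg hcoef]
          field_simp
      _ ≤ c / ‖x‖ * ‖x - y‖ := by gcongr; exact norm_sub_norm_le x y
  calc ‖(c / ‖x‖) • x - (c / ‖y‖) • y‖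
      = ‖(c / ‖x‖) • (x - y) - (c / ‖y‖ - c / ‖x‖) • y‖ := by congr 1; module
    _ ≤ ‖(c / ‖x‖) • (x - y)‖ + ‖(c / ‖y‖ - c / ‖x‖) • y‖ := norm_sub_le _ _
    _ ≤ c / ‖x‖ * ‖x - y‖ + c / ‖x‖ * ‖x - y‖ := by
          rw [norm_smul, Real.norm_of_nonneg (by positivity)]
          gcongr
    _ = 2 * c / ‖x‖ * ‖x - y‖ := by ring

lemma norm_div_norm_smul {x : E} (hx : x ≠ 0) {c : ℝ} (hc : 0 ≤ c) :
    ‖(c / ‖x‖) • x‖ = c := by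
  rw [norm_smul, Real.norm_of_nonneg (by positivity), div_mul_cancel₀ _ (norm_ne_zero_iff.2 hx)]

section LipschitzOnBall

variable {f : E → F} {h L : ℝ}
  (hlip : ∀ x y : E, max ‖x‖ ‖y‖ ≤ h → ‖f x - f y‖ ≤ L * ‖x - y‖)
include hlip

lemma norm_radialExtension_sub_le_of_norm_le (hh : 0 < h) (hL : 0 ≤ L) (hf0 : ‖f 0‖ ≤ h)
    {x y : E} (hy : h < ‖y‖) (hyx : ‖y‖ ≤ ‖x‖) :
    ‖radialExtension f h x - radialExtension f h y‖ ≤ (3 * L + 1) * ‖x - y‖ := by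
  have ha : 0 < ‖x‖ := hh.trans (hy.trans_le hyx)
  have hy0 : y ≠ 0 := norm_pos_iff.1 (hh.trans hy)
  have hx0 : x ≠ 0 := norm_pos_iff.1 ha
  set u := (h / ‖x‖) • x
  set v := (h / ‖y‖) • y
  have hu : ‖u‖ = h := norm_div_norm_smul hx0 hh.le
  have hv : ‖v‖ = h := norm_div_norm_smul hy0 hh.le
  have hfuv : ‖f u - f v‖ ≤ L * (2 * h / ‖x‖ * ‖x - y‖) :=
    (hlip u v (by simp [hu, hv])).trans
      (by gcongr; exact norm_div_norm_smul_sub_div_norm_smul_le hy0 hyx hh.le)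
  have hfv : ‖f v‖ ≤ (L + 1) * h := by
    have hbound := norm_le_of_lipschitz_on_closedBall hlip hv.le
    rw [hv] at hbound
    linarith
  have hfirst : ‖(‖x‖ / h) • (f u - f v)‖ ≤ 2 * L * ‖x - y‖ := by
    calc ‖(‖x‖ / h) • (f u - f v)‖ ≤ ‖x‖ / h * (L * (2 * h / ‖x‖ * ‖x - y‖)) := by
          rw [norm_smul, Real.norm_of_nonneg (by positivity)]
          gcongr
      _ = 2 * L * ‖x - y‖ := by field_simp
  have hsecond : ‖((‖x‖ - ‖y‖) / h) • f v‖ ≤ (L + 1) * ‖x - y‖ := by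
    calc ‖((‖x‖ - ‖y‖) / h) • f v‖ ≤ ‖x - y‖ / h * ((L + 1) * h) := by
          rw [norm_smul, Real.norm_of_nonneg (div_nonneg (sub_nonneg.2 hyx) hh.le)]
          gcongr
          exact norm_sub_norm_le x y
      _ = (L + 1) * ‖x - y‖ := by field_simp
  calc ‖radialExtension f h x - radialExtension f h y‖
      = ‖(‖x‖ / h) • (f u - f v) + ((‖x‖ - ‖y‖) / h) • f v‖ := by
        unfold radialExtension; congr 1; module
    _ ≤ 2 * L * ‖x - y‖ + (L + 1) * ‖x - y‖ := (norm_add_le _ _).trans (add_le_add hfirst hsecond)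
    _ = (3 * L + 1) * ‖x - y‖ := by ring

lemma norm_radialExtension_sub_le (hh : 0 < h) (hL : 0 ≤ L) (hf0 : ‖f 0‖ ≤ h)
    {x y : E} (hx : h < ‖x‖) (hy : h < ‖y‖) :
    ‖radialExtension f h x - radialExtension f h y‖ ≤ (3 * L + 1) * ‖x - y‖ := by
  rcases le_total ‖y‖ ‖x‖ with hyx | hxy
  · exact norm_radialExtension_sub_le_of_norm_le hlip hh hL hf0 hy hyx
  · rw [norm_sub_rev, norm_sub_rev x]
    exact norm_radialExtension_sub_le_of_norm_le hlip hh hL hf0 hx hxy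

end LipschitzOnBall

theorem stmt_1 {d : ℕ}
    (f : EuclideanSpace ℝ (Fin d) → EuclideanSpace ℝ (Fin d))
    (h Lh : ℝ) (hh : 0 < h) (hLh : 0 < Lh)
    (hlip : ∀ x y : EuclideanSpace ℝ (Fin d),
      max ‖x‖ ‖y‖ ≤ h → ‖f x - f y‖ ≤ Lh * ‖x - y‖)
    (hf0 : ‖f 0‖ ≤ h) :
    ∀ x y : EuclideanSpace ℝ (Fin d), h < ‖x‖ → h < ‖y‖ →
      ‖(‖x‖ / h) • f ((h / ‖x‖) • x) - (‖y‖ / h) • f ((h / ‖y‖) • y)‖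
        ≤ (3 * Lh + 1) * ‖x - y‖ :=
  fun _ _ hx hy => norm_radialExtension_sub_le hlip hh hLh.le hf0 hx hy
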